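/- arXiv:1403.7736 — 7 statements merged into one kernel-verified Lean document; each statement's English description precedes it below -/
import Mathlib

section
/- Let g ≥ 2 be an even integer. The presented group with generators a_1, b_1, …, a_g, b_g and relator set consisting of the genus-g surface relator r_g, the generators b_1, …, b_g, and the words a_i a_{g+1-i} for 1 ≤ i ≤ g/2, is isomorphic to the free group of rank g/2. -/
/-- Generators of the genus-`g` surface group presentation: `Sum.inl i` is `a_{i+1}`,
`Sum.inr i` is `b_{i+1}` (`0`-based indexing). -/
abbrev SurfGen (g : ℕ) := Fin g ⊕ Fin g

/-- The generator `a_{i+1}` as an element of the free group. -/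
def genA (g : ℕ) (i : Fin g) : FreeGroup (SurfGen g) := FreeGroup.of (Sum.inl i)

/-- The generator `b_{i+1}` as an element of the free group. -/
def genB (g : ℕ) (i : Fin g) : FreeGroup (SurfGen g) := FreeGroup.of (Sum.inr i)

/-- The word `c_i = b_i⁻¹ ⋯ b_1⁻¹ (a_1 b_1 a_1⁻¹) ⋯ (a_i b_i a_i⁻¹)` (here `i : ℕ`, `1`-based). -/
def cword (g i : ℕ) : FreeGroup (SurfGen g) :=
  ((((List.finRange g).take i).reverse.map fun j => (genB g j)⁻¹).prod) *
  ((((List.finRange g).take i).map fun j => genA g j * genB g j * (genA g j)⁻¹).prod)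

/-- The genus-`g` surface relator
`r_g = b_g⁻¹ ⋯ b_1⁻¹ (a_1 b_1 a_1⁻¹) ⋯ (a_g b_g a_g⁻¹)`. -/
def surfRel (g : ℕ) : FreeGroup (SurfGen g) := cword g g

/-! Once the `b_i` are killed, the surface relator collapses to `∏ a_i a_i⁻¹ = 1`, and the
relators `a_i a_{g+1-i}` only say `a_{g+1-i} = a_i⁻¹`. Hence `a_i ↦ x_i`, `a_{g+1-i} ↦ x_i⁻¹`,
`b_i ↦ 1` and `x_i ↦ a_i` (for `i ≤ g / 2`) are mutually inverse homomorphisms. -/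

open PresentedGroup

section

variable {g : ℕ}

lemma map_cword_eq_one {G : Type*} [Group G] (φ : FreeGroup (SurfGen g) →* G)
    (hb : ∀ i, φ (genB g i) = 1) (n : ℕ) : φ (cword g n) = 1 := by
  simp [cword, map_list_prod, List.map_map, Function.comp_def, hb]

lemma exists_eq_castLE_or_eq_rev_castLE (hg : Even g) (i : Fin g) :
    ∃ j : Fin (g / 2), i = Fin.castLE (Nat.div_le_self g 2) j ∨
      i = (Fin.castLE (Nat.div_le_self g 2) j).rev := by
  obtain ⟨m, rfl⟩ := hg
  by_cases hi : (i : ℕ) < (m + m) / 2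
  · exact ⟨⟨i, hi⟩, Or.inl rfl⟩
  · refine ⟨⟨i.rev, by rw [Fin.val_rev]; omega⟩, Or.inr ?_⟩
    ext
    simp only [Fin.val_rev, Fin.val_castLE]
    omega

end

section

variable (g : ℕ)

def foldedSurfaceRels : Set (FreeGroup (SurfGen g)) :=
  {surfRel g}
    ∪ Set.range (fun i : Fin g => genB g i)
    ∪ Set.range (fun i : Fin (g / 2) =>
        genA g (Fin.castLE (Nat.div_le_self g 2) i) *
          genA g ((Fin.castLE (Nat.div_le_self g 2) i).rev))

-- For even `g` one of the first two branches always applies.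
def foldA (i : Fin g) : FreeGroup (Fin (g / 2)) :=
  if h : (i : ℕ) < g / 2 then .of ⟨i, h⟩
  else if h' : (i.rev : ℕ) < g / 2 then (.of ⟨i.rev, h'⟩)⁻¹ else 1

def foldGen : SurfGen g → FreeGroup (Fin (g / 2)) := Sum.elim (foldA g) 1

variable {g}

lemma foldA_castLE (j : Fin (g / 2)) :
    foldA g (Fin.castLE (Nat.div_le_self g 2) j) = .of j := by
  simp [foldA]

lemma foldA_rev_castLE (hg : Even g) (j : Fin (g / 2)) :
    foldA g (Fin.castLE (Nat.div_le_self g 2) j).rev = (.of j)⁻¹ := by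
  have hj := j.isLt
  have hrev : ¬ ((Fin.castLE (Nat.div_le_self g 2) j).rev : ℕ) < g / 2 := by
    obtain ⟨m, rfl⟩ := hg
    rw [Fin.val_rev, Fin.val_castLE]
    omega
  rw [foldA, dif_neg hrev, dif_pos (by simp)]
  congr 2
  ext
  simp

lemma lift_foldGen_eq_one (hg : Even g) :
    ∀ r ∈ foldedSurfaceRels g, FreeGroup.lift (foldGen g) r = 1 := by
  have hb (i : Fin g) : FreeGroup.lift (foldGen g) (genB g i) = 1 := by simp [genB, foldGen]
  rintro r ((rfl | ⟨i, rfl⟩) | ⟨j, rfl⟩)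
  · exact map_cword_eq_one _ hb g
  · exact hb i
  · simp [genA, foldGen, foldA_castLE, foldA_rev_castLE hg]

lemma of_inr_eq_one (i : Fin g) :
    (of (Sum.inr i) : PresentedGroup (foldedSurfaceRels g)) = 1 :=
  one_of_mem (Or.inl (Or.inr ⟨i, rfl⟩))

lemma of_inl_rev_castLE (j : Fin (g / 2)) :
    (of (Sum.inl (Fin.castLE (Nat.div_le_self g 2) j).rev) : PresentedGroup (foldedSurfaceRels g))
      = (of (Sum.inl (Fin.castLE (Nat.div_le_self g 2) j)))⁻¹ :=
  (inv_eq_of_mul_eq_one_right (one_of_mem (Or.inr ⟨j, rfl⟩))).symm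

end

theorem stmt0_general (g : ℕ) (heven : Even g) :
    Nonempty (PresentedGroup
      (({surfRel g}
        ∪ Set.range (fun i : Fin g => genB g i)
        ∪ Set.range (fun i : Fin (g / 2) =>
            genA g (Fin.castLE (Nat.div_le_self g 2) i) *
              genA g ((Fin.castLE (Nat.div_le_self g 2) i).rev))) : Set (FreeGroup (SurfGen g)))
      ≃* FreeGroup (Fin (g / 2))) := by
  let φ : PresentedGroup (foldedSurfaceRels g) →* FreeGroup (Fin (g / 2)) :=
    toGroup (lift_foldGen_eq_one heven)
  let ψ : FreeGroup (Fin (g / 2)) →* PresentedGroup (foldedSurfaceRels g) :=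
    FreeGroup.lift fun j => of (Sum.inl (Fin.castLE (Nat.div_le_self g 2) j))
  refine ⟨φ.toMulEquiv ψ ?_ ?_⟩
  · ext (i | i)
    · obtain ⟨j, rfl | rfl⟩ := exists_eq_castLE_or_eq_rev_castLE heven i
      · simp [φ, ψ, foldGen, foldA_castLE]
      · simp [φ, ψ, foldGen, foldA_castLE, of_inl_rev_castLE]
    · simp [φ, ψ, foldGen, of_inr_eq_one]
  · ext j
    simp [φ, ψ, foldGen, foldA_castLE]

/-- for even `g ≥ 2`, the presented group
`⟨a_1, b_1, …, a_g, b_g ∣ r_g, b_1, …, b_g, a_i a_{g+1-i} (1 ≤ i ≤ g/2)⟩`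
is isomorphic to the free group of rank `g/2`. -/
theorem stmt0 (g : ℕ) (hg : 2 ≤ g) (heven : Even g) :
    Nonempty (PresentedGroup
      (({surfRel g}
        ∪ Set.range (fun i : Fin g => genB g i)
        ∪ Set.range (fun i : Fin (g / 2) =>
            genA g (Fin.castLE (Nat.div_le_self g 2) i) *
              genA g ((Fin.castLE (Nat.div_le_self g 2) i).rev))) : Set (FreeGroup (SurfGen g)))
      ≃* FreeGroup (Fin (g / 2))) :=
  stmt0_general g heven
end

section
/- Let g ≥ 2 be an even integer. The presented group with generators a_1, b_1, …, a_g, b_g and relator set consisting of the genus-g surface relator r_g, the commutator a_1 b_1 a_1^{-1} b_1^{-1}, the generators b_2, …, b_{g−1}, the word b_1 b_g, and the words a_i a_{g+1-i} for 1 ≤ i ≤ g/2, is isomorphic to the free product of the free group of rank g/2 − 1 with ℤ × ℤ. -/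
/-! The relators `b_i = 1` (`1 < i < g`), `b_g = b_1⁻¹` and `a_{g+1-i} = a_i⁻¹` eliminate every
generator except `a_1, …, a_{g/2}, b_1`, and after these substitutions `r_g` collapses to a
consequence of `[a_1, b_1] = 1`. So the group is `⟨a_1, b_1 ∣ [a_1, b_1]⟩ ∗ F(a_2, …, a_{g/2})`:
we write down homomorphisms in both directions and check on generators that they are mutually
inverse. Evenness of `g` is what makes `i ↦ g + 1 - i` pair off all the `a_i` without a fixed
point. -/

open Multiplicative

theorem List.prod_map_finRange_eq_mul_of_eq_one {M : Type*} [Monoid M] {n : ℕ}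
    (f : Fin (n + 2) → M) (hf : ∀ i : Fin (n + 2), i ≠ 0 → i ≠ Fin.last (n + 1) → f i = 1) :
    ((List.finRange (n + 2)).map f).prod = f 0 * f (Fin.last (n + 1)) := by
  rw [← List.ofFn_eq_map, List.ofFn_succ, List.ofFn_succ', List.prod_cons, List.concat_eq_append,
    List.prod_append, List.prod_eq_one, one_mul]
  · simp
  · simp only [List.mem_ofFn, forall_exists_index]
    rintro _ i rfl
    exact hf _ (Fin.succ_ne_zero _) (Fin.succ_lt_succ_iff.mpr i.castSucc_lt_last).ne

section IntProd

variable {G : Type*} [Group G]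

theorem Multiplicative.ofAdd_int_prod (m n : ℤ) :
    ofAdd (m, n) = ofAdd ((1 : ℤ), (0 : ℤ)) ^ m * ofAdd ((0 : ℤ), (1 : ℤ)) ^ n := by
  rw [← ofAdd_zsmul, ← ofAdd_zsmul, ← ofAdd_add]
  simp

theorem MonoidHom.ext_mint_prod {f f' : Multiplicative (ℤ × ℤ) →* G}
    (h₁ : f (ofAdd (1, 0)) = f' (ofAdd (1, 0))) (h₂ : f (ofAdd (0, 1)) = f' (ofAdd (0, 1))) :
    f = f' := by
  refine MonoidHom.ext fun x => ?_
  obtain ⟨⟨m, n⟩, rfl⟩ := ofAdd.surjective x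
  simp only [Multiplicative.ofAdd_int_prod m n, map_mul, map_zpow, h₁, h₂]

def Commute.intProdHom {a b : G} (h : Commute a b) : Multiplicative (ℤ × ℤ) →* G where
  toFun x := a ^ (toAdd x).1 * b ^ (toAdd x).2
  map_one' := by simp
  map_mul' x y := by
    simp only [toAdd_mul, Prod.fst_add, Prod.snd_add, zpow_add]
    exact (h.zpow_zpow _ _).mul_mul_mul_comm _ _

@[simp]
theorem Commute.intProdHom_ofAdd {a b : G} (h : Commute a b) (m n : ℤ) :
    h.intProdHom (ofAdd (m, n)) = a ^ m * b ^ n :=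
  rfl

end IntProd

namespace SurfaceFold

open Monoid.Coprod

variable {g : ℕ}

def first (hg : 2 ≤ g) : Fin g := ⟨0, Nat.zero_lt_of_lt hg⟩

def last (hg : 2 ≤ g) : Fin g := ⟨g - 1, Nat.sub_one_lt_of_lt hg⟩

theorem map_surfRel_eq_one {G : Type*} [Group G] (hg : 2 ≤ g)
    (φ : FreeGroup (SurfGen g) →* G)
    (hb : ∀ i : Fin g, (i : ℕ) ≠ 0 → (i : ℕ) ≠ g - 1 → φ (genB g i) = 1)
    (hbg : φ (genB g (last hg)) = (φ (genB g (first hg)))⁻¹)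
    (hag : φ (genA g (last hg)) = (φ (genA g (first hg)))⁻¹)
    (hab : Commute (φ (genA g (first hg))) (φ (genB g (first hg)))) :
    φ (surfRel g) = 1 := by
  obtain ⟨n, rfl⟩ : ∃ n, g = n + 2 := ⟨g - 2, by omega⟩
  have hb' : ∀ i : Fin (n + 2), i ≠ 0 → i ≠ Fin.last (n + 1) → φ (genB _ i) = 1 := fun i h0 hl =>
    hb i (fun h => h0 (Fin.ext h)) (fun h => hl (Fin.ext (by simp [h])))
  rw [surfRel, cword, List.take_of_length_le (by simp)]
  simp only [List.map_reverse, List.prod_reverse_noncomm, List.map_map, Function.comp_def, inv_inv,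
    map_mul, map_inv, map_list_prod]
  rw [List.prod_map_finRange_eq_mul_of_eq_one _ (fun i h0 hl => hb' i h0 hl),
    List.prod_map_finRange_eq_mul_of_eq_one _ (fun i h0 hl => by simp only [hb' i h0 hl]; group)]
  have hbg' : φ (genB _ (Fin.last (n + 1))) = (φ (genB _ 0))⁻¹ := hbg
  have hag' : φ (genA _ (Fin.last (n + 1))) = (φ (genA _ 0))⁻¹ := hag
  have hab' : Commute (φ (genA _ 0)) (φ (genB _ 0)) := hab
  rw [hbg', hag', mul_inv_cancel, inv_one, one_mul, inv_inv, hab'.mul_inv_cancel,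
    hab'.inv_right.inv_mul_cancel, mul_inv_cancel]

variable (g)

def rels (hg : 2 ≤ g) : Set (FreeGroup (SurfGen g)) :=
  {surfRel g}
    ∪ {genA g (first hg) * genB g (first hg) *
        (genA g (first hg))⁻¹ * (genB g (first hg))⁻¹}
    ∪ Set.range (fun i : Fin (g - 2) => genB g (Fin.castLE (Nat.sub_lt_self two_pos hg) i.succ))
    ∪ {genB g (first hg) * genB g (last hg)}
    ∪ Set.range (fun i : Fin (g / 2) =>
        genA g (Fin.castLE (Nat.div_le_self g 2) i) *
          genA g ((Fin.castLE (Nat.div_le_self g 2) i).rev))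

abbrev Target := Monoid.Coprod (FreeGroup (Fin (g / 2 - 1))) (Multiplicative (ℤ × ℤ))

def torusA : Target g := inr (ofAdd (1, 0))

def torusB : Target g := inr (ofAdd (0, 1))

theorem commute_torusA_torusB : Commute (torusA g) (torusB g) :=
  (Commute.all _ _).map inr

variable {g}

def halfImage (j : Fin (g / 2)) : Target g :=
  if h : (j : ℕ) = 0 then torusA g else inl (FreeGroup.of ⟨j - 1, by omega⟩)

theorem halfImage_succ (k : Fin (g / 2 - 1)) :
    halfImage ⟨k + 1, by omega⟩ = inl (FreeGroup.of k) :=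
  dif_neg k.val.succ_ne_zero

theorem rev_lt_half (heven : Even g) {i : Fin g} (hi : ¬ (i : ℕ) < g / 2) :
    g - 1 - i < g / 2 := by
  obtain ⟨k, rfl⟩ := heven
  omega

def imageA (heven : Even g) (i : Fin g) : Target g :=
  if h : (i : ℕ) < g / 2 then halfImage ⟨i, h⟩
  else (halfImage ⟨g - 1 - i, rev_lt_half heven h⟩)⁻¹

def imageB (i : Fin g) : Target g :=
  if (i : ℕ) = 0 then torusB g else if (i : ℕ) = g - 1 then (torusB g)⁻¹ else 1

def images (heven : Even g) : SurfGen g → Target g :=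
  Sum.elim (imageA heven) imageB

theorem val_rev_castLE (j : Fin (g / 2)) :
    ((Fin.castLE (Nat.div_le_self g 2) j).rev : ℕ) = g - 1 - j := by
  simp only [Fin.val_rev, Fin.val_castLE]
  omega

theorem imageA_castLE (heven : Even g) (j : Fin (g / 2)) :
    imageA heven (Fin.castLE (Nat.div_le_self g 2) j) = halfImage j :=
  dif_pos j.isLt

theorem imageA_rev_castLE (heven : Even g) (j : Fin (g / 2)) :
    imageA heven (Fin.castLE (Nat.div_le_self g 2) j).rev = (halfImage j)⁻¹ := by
  have h2 := Nat.even_iff.mp heven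
  have hj := j.isLt
  rw [imageA, dif_neg (by rw [val_rev_castLE]; omega)]
  congr 2
  ext
  simp only [val_rev_castLE]
  omega

theorem imageA_first (hg : 2 ≤ g) (heven : Even g) : imageA heven (first hg) = torusA g :=
  imageA_castLE heven ⟨0, by omega⟩

theorem imageA_last (hg : 2 ≤ g) (heven : Even g) :
    imageA heven (last hg) = (torusA g)⁻¹ :=
  imageA_rev_castLE heven ⟨0, by omega⟩

theorem exists_eq_castLE_or_eq_rev (heven : Even g) (i : Fin g) :
    ∃ j : Fin (g / 2), i = Fin.castLE (Nat.div_le_self g 2) j ∨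
      i = (Fin.castLE (Nat.div_le_self g 2) j).rev := by
  by_cases hi : (i : ℕ) < g / 2
  · exact ⟨⟨i, hi⟩, Or.inl rfl⟩
  · refine ⟨⟨g - 1 - i, rev_lt_half heven hi⟩, Or.inr (Fin.ext ?_)⟩
    rw [val_rev_castLE]
    change (i : ℕ) = g - 1 - (g - 1 - i)
    omega

theorem imageB_first (hg : 2 ≤ g) : imageB (first hg) = torusB g :=
  if_pos rfl

theorem imageB_last (hg : 2 ≤ g) : imageB (last hg) = (torusB g)⁻¹ :=
  (if_neg (show g - 1 ≠ 0 by omega)).trans (if_pos rfl)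

theorem imageB_of_ne (i : Fin g) (h0 : (i : ℕ) ≠ 0) (hl : (i : ℕ) ≠ g - 1) : imageB i = 1 := by
  rw [imageB, if_neg h0, if_neg hl]

theorem lift_images_genA (heven : Even g) (i : Fin g) :
    FreeGroup.lift (images heven) (genA g i) = imageA heven i :=
  FreeGroup.lift_apply_of

theorem lift_images_genB (heven : Even g) (i : Fin g) :
    FreeGroup.lift (images heven) (genB g i) = imageB i :=
  FreeGroup.lift_apply_of

theorem lift_images_rels (hg : 2 ≤ g) (heven : Even g) :
    ∀ r ∈ rels g hg, FreeGroup.lift (images heven) r = 1 := by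
  have hAB := commute_torusA_torusB g
  rintro r ((((rfl | rfl) | ⟨i, rfl⟩) | rfl) | ⟨j, rfl⟩)
  · refine map_surfRel_eq_one hg _ fun i h0 hl => by
      rw [lift_images_genB, imageB_of_ne i h0 hl] ?_ ?_ ?_ <;>
      simp only [lift_images_genA, lift_images_genB, imageA_first hg heven, imageA_last hg heven,
        imageB_first hg, imageB_last hg, hAB]
  · simp only [map_mul, map_inv, lift_images_genA, lift_images_genB, imageA_first hg heven,
      imageB_first hg, hAB.mul_inv_cancel, mul_inv_cancel]
  · have := i.isLt
    rw [lift_images_genB]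
    exact imageB_of_ne _ i.val.succ_ne_zero (by simp only [Fin.val_castLE, Fin.val_succ]; omega)
  · simp only [map_mul, lift_images_genB, imageB_first hg, imageB_last hg, mul_inv_cancel]
  · simp only [map_mul, lift_images_genA, imageA_castLE, imageA_rev_castLE, mul_inv_cancel]

section Presented

variable (hg : 2 ≤ g)

local notation "P" => PresentedGroup (rels g hg)

theorem mk_genA (i : Fin g) : PresentedGroup.mk (rels g hg) (genA g i) = .of (Sum.inl i) := rfl

theorem mk_genB (i : Fin g) : PresentedGroup.mk (rels g hg) (genB g i) = .of (Sum.inr i) := rfl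

theorem commute_of_inl_first_of_inr_first :
    Commute (.of (Sum.inl (first hg)) : P) (.of (Sum.inr (first hg))) := by
  have h := PresentedGroup.one_of_mem (rels := rels g hg) (Or.inl <| Or.inl <| Or.inl <| Or.inr rfl)
  rw [map_mul, map_mul, map_mul, map_inv, map_inv, mk_genA, mk_genB, ← commutatorElement_def] at h
  exact commutatorElement_eq_one_iff_commute.mp h

theorem of_inr_eq_one (i : Fin g) (h0 : (i : ℕ) ≠ 0) (hl : (i : ℕ) ≠ g - 1) :
    (.of (Sum.inr i) : P) = 1 := by
  have hmem : genB g i ∈ rels g hg := Or.inl <| Or.inl <| Or.inr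
    ⟨⟨i - 1, by omega⟩, congrArg _ (Fin.ext (by simp only [Fin.val_castLE, Fin.val_succ]; omega))⟩
  exact PresentedGroup.one_of_mem hmem

theorem of_inr_last :
    (.of (Sum.inr (last hg)) : P) = (.of (Sum.inr (first hg)))⁻¹ := by
  have h := PresentedGroup.one_of_mem (rels := rels g hg) (Or.inl <| Or.inr rfl)
  rw [map_mul, mk_genB, mk_genB] at h
  exact eq_inv_of_mul_eq_one_right h

theorem of_inl_rev_castLE (j : Fin (g / 2)) :
    (.of (Sum.inl (Fin.castLE (Nat.div_le_self g 2) j).rev) : P) =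
      (.of (Sum.inl (Fin.castLE (Nat.div_le_self g 2) j)))⁻¹ := by
  have h := PresentedGroup.one_of_mem (rels := rels g hg) (Or.inr ⟨j, rfl⟩)
  rw [map_mul, mk_genA, mk_genA] at h
  exact eq_inv_of_mul_eq_one_right h

noncomputable def ofTarget : Target g →* P :=
  Monoid.Coprod.lift (FreeGroup.lift fun k => .of (Sum.inl ⟨k + 1, by omega⟩))
    (commute_of_inl_first_of_inr_first hg).intProdHom

theorem ofTarget_inl_of (k : Fin (g / 2 - 1)) :
    ofTarget hg (inl (FreeGroup.of k)) = .of (Sum.inl ⟨k + 1, by omega⟩) := by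
  rw [ofTarget, Monoid.Coprod.lift_apply_inl, FreeGroup.lift_apply_of]

theorem ofTarget_torusA : ofTarget hg (torusA g) = .of (Sum.inl (first hg)) := by
  rw [torusA, ofTarget, Monoid.Coprod.lift_apply_inr, Commute.intProdHom_ofAdd, zpow_one, zpow_zero,
    mul_one]

theorem ofTarget_torusB : ofTarget hg (torusB g) = .of (Sum.inr (first hg)) := by
  rw [torusB, ofTarget, Monoid.Coprod.lift_apply_inr, Commute.intProdHom_ofAdd, zpow_one, zpow_zero,
    one_mul]

theorem ofTarget_halfImage (j : Fin (g / 2)) :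
    ofTarget hg (halfImage j) = .of (Sum.inl (Fin.castLE (Nat.div_le_self g 2) j)) := by
  unfold halfImage
  split_ifs with h
  · rw [ofTarget_torusA]
    exact congrArg _ (congrArg _ (Fin.ext h.symm))
  · rw [ofTarget_inl_of]
    exact congrArg _ (congrArg _ (Fin.ext (by simp only [Fin.val_castLE]; omega)))

noncomputable def toTarget (heven : Even g) : P →* Target g :=
  PresentedGroup.toGroup (lift_images_rels hg heven)

theorem toTarget_of (heven : Even g) (x : SurfGen g) :
    toTarget hg heven (.of x) = images heven x :=
  PresentedGroup.toGroup.of _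

theorem ofTarget_comp_toTarget (heven : Even g) :
    (ofTarget hg).comp (toTarget hg heven) = MonoidHom.id P := by
  refine PresentedGroup.ext fun x => ?_
  rw [MonoidHom.comp_apply, toTarget_of, MonoidHom.id_apply]
  rcases x with i | i
  · obtain ⟨j, rfl | rfl⟩ := exists_eq_castLE_or_eq_rev heven i
    · rw [images, Sum.elim_inl, imageA_castLE, ofTarget_halfImage]
    · rw [images, Sum.elim_inl, imageA_rev_castLE, map_inv, ofTarget_halfImage,
        of_inl_rev_castLE]
  · rw [images, Sum.elim_inr]
    by_cases h0 : (i : ℕ) = 0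
    · rw [show i = first hg from Fin.ext h0, imageB_first hg, ofTarget_torusB]
    by_cases hl : (i : ℕ) = g - 1
    · rw [show i = last hg from Fin.ext hl, imageB_last hg, map_inv, ofTarget_torusB,
        of_inr_last]
    · rw [imageB_of_ne i h0 hl, map_one, of_inr_eq_one hg i h0 hl]

theorem toTarget_comp_ofTarget (heven : Even g) :
    (toTarget hg heven).comp (ofTarget hg) = MonoidHom.id (Target g) := by
  refine Monoid.Coprod.hom_ext (FreeGroup.ext_hom _ _ fun k => ?_) (MonoidHom.ext_mint_prod ?_ ?_)
  · change toTarget hg heven (ofTarget hg (inl (FreeGroup.of k))) = _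
    rw [ofTarget_inl_of, toTarget_of]
    exact (imageA_castLE heven ⟨k + 1, by omega⟩).trans (halfImage_succ k)
  · change toTarget hg heven (ofTarget hg (torusA g)) = torusA g
    rw [ofTarget_torusA, toTarget_of]
    exact imageA_first hg heven
  · change toTarget hg heven (ofTarget hg (torusB g)) = torusB g
    rw [ofTarget_torusB, toTarget_of]
    exact imageB_first hg

end Presented

end SurfaceFold

/-- for even `g ≥ 2`, the presented group
`⟨a_1, b_1, …, a_g, b_g ∣ r_g, a_1 b_1 a_1⁻¹ b_1⁻¹, b_2, …, b_{g-1}, b_1 b_g,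
a_i a_{g+1-i} (1 ≤ i ≤ g/2)⟩` is isomorphic to the free product of the free group of
rank `g/2 - 1` with `ℤ × ℤ`. -/
theorem stmt2 (g : ℕ) (hg : 2 ≤ g) (heven : Even g) :
    Nonempty (PresentedGroup
      (({surfRel g}
        ∪ {genA g ⟨0, by omega⟩ * genB g ⟨0, by omega⟩ *
            (genA g ⟨0, by omega⟩)⁻¹ * (genB g ⟨0, by omega⟩)⁻¹}
        ∪ Set.range (fun i : Fin (g - 2) => genB g (Fin.castLE (by omega) i.succ))
        ∪ {genB g ⟨0, by omega⟩ * genB g ⟨g - 1, by omega⟩}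
        ∪ Set.range (fun i : Fin (g / 2) =>
            genA g (Fin.castLE (Nat.div_le_self g 2) i) *
              genA g ((Fin.castLE (Nat.div_le_self g 2) i).rev))) : Set (FreeGroup (SurfGen g)))
      ≃* Monoid.Coprod (FreeGroup (Fin (g / 2 - 1))) (Multiplicative (ℤ × ℤ))) := by
  exact ⟨MonoidHom.toMulEquiv _ _ (SurfaceFold.ofTarget_comp_toTarget hg heven)
    (SurfaceFold.toTarget_comp_ofTarget hg heven)⟩
end

section
/- Let g ≥ 2 be an even integer. The presented group with generators a_1, b_1, …, a_g, b_g and relator set consisting of the genus-g surface relator r_g, the words c_g and c_{g/2}, the words a_i a_{g+1-i} for 1 ≤ i ≤ g/2, and the words b_i a_{g+1-i} b_{g+1-i} a_{g+1-i}^{-1} for 1 ≤ i ≤ g/2, is isomorphic to the genus-(g/2) surface group, i.e. to the presented group with generators a'_1, b'_1, …, a'_{g/2}, b'_{g/2} and the single relator r_{g/2}. -/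
/-!
Put `n = g / 2`, so `g = n + n`, and for `i ≤ n` let `j = g + 1 - i`. The relators `a_i a_j` and
`b_i a_j b_j a_j⁻¹` express the first half of the generators through the second half:
`a_i = a_j⁻¹` and `b_i = a_j b_j⁻¹ a_j⁻¹`. This substitution exchanges the factors `b_i⁻¹` and
`a_j b_j a_j⁻¹`, and `a_i b_i a_i⁻¹` and `b_j⁻¹`, so it turns `c_n` into `Y X⁻¹`, where
`X = b_{n+1} ⋯ b_g` and `Y = ∏_{j > n} a_j b_j a_j⁻¹`, whereas the genus-`n` surface relator in
the second half of the generators is `X⁻¹ Y`. Since `c_g = X⁻¹ c_n Y`, every relator becomes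
trivial modulo `X⁻¹ Y`; conversely `X⁻¹ Y = 1` follows from `c_g = 1` and `c_n = 1`.
-/

namespace PresentedGroup

variable {α β : Type*} {R : Set (FreeGroup α)} {S : Set (FreeGroup β)}

def mulEquivOfToGroupInverse {f : α → PresentedGroup S} {f' : β → PresentedGroup R}
    (hf : ∀ r ∈ R, FreeGroup.lift f r = 1) (hf' : ∀ s ∈ S, FreeGroup.lift f' s = 1)
    (left_inv : ∀ x, toGroup hf' (f x) = of x) (right_inv : ∀ y, toGroup hf (f' y) = of y) :
    PresentedGroup R ≃* PresentedGroup S :=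
  (toGroup hf).toMulEquiv (toGroup hf')
    (ext fun x => by simp [toGroup.of, left_inv])
    (ext fun y => by simp [toGroup.of, right_inv])

end PresentedGroup

theorem Fin.rev_castAdd_eq_natAdd {n : ℕ} (i : Fin n) :
    (Fin.castAdd n i).rev = Fin.natAdd n i.rev := by
  rw [Fin.rev_castAdd, Fin.natAdd_eq_addNat]

theorem List.finRange_add (m n : ℕ) :
    finRange (m + n) = (finRange m).map (Fin.castAdd n) ++ (finRange n).map (Fin.natAdd m) := by
  rw [← ofFn_id, ofFn_add, ofFn_eq_map, ofFn_eq_map]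
  rfl

section SurfaceWord

variable {ι κ G H : Type*} [Group G] [Group H] (a b : ι → G)

def conjProd (l : List ι) : G := (l.map fun j => a j * b j * (a j)⁻¹).prod

/-- `surfaceWord a b [1, …, g] = b_g⁻¹ ⋯ b_1⁻¹ (a_1 b_1 a_1⁻¹) ⋯ (a_g b_g a_g⁻¹)`. -/
def surfaceWord (l : List ι) : G := ((l.map b).prod)⁻¹ * conjProd a b l

theorem surfaceWord_eq_one_iff (l : List ι) :
    surfaceWord a b l = 1 ↔ (l.map b).prod = conjProd a b l :=
  inv_mul_eq_one

theorem surfaceWord_append (l₁ l₂ : List ι) :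
    surfaceWord a b (l₁ ++ l₂) = ((l₂.map b).prod)⁻¹ * surfaceWord a b l₁ * conjProd a b l₂ := by
  simp only [surfaceWord, conjProd, List.map_append, List.prod_append]
  group

theorem map_conjProd (f : G →* H) (l : List ι) :
    f (conjProd a b l) = conjProd (f ∘ a) (f ∘ b) l := by
  simp [conjProd, map_list_prod, Function.comp_def]

theorem map_surfaceWord (f : G →* H) (l : List ι) :
    f (surfaceWord a b l) = surfaceWord (f ∘ a) (f ∘ b) l := by
  simp [surfaceWord, map_conjProd, map_list_prod]

theorem conjProd_map (e : κ → ι) (l : List κ) :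
    conjProd a b (l.map e) = conjProd (a ∘ e) (b ∘ e) l := by
  simp [conjProd, Function.comp_def]

theorem surfaceWord_map (e : κ → ι) (l : List κ) :
    surfaceWord a b (l.map e) = surfaceWord (a ∘ e) (b ∘ e) l := by
  simp [surfaceWord, conjProd_map]

theorem surfaceWord_inv_conj_reverse (l : List ι) :
    surfaceWord (fun j => (a j)⁻¹) (fun j => a j * (b j)⁻¹ * (a j)⁻¹) l.reverse =
      conjProd a b l * ((l.map b).prod)⁻¹ := by
  simp [surfaceWord, conjProd, List.prod_inv_reverse, Function.comp_def, mul_assoc]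

end SurfaceWord

theorem cword_eq_surfaceWord (g i : ℕ) :
    cword g i = surfaceWord (genA g) (genB g) ((List.finRange g).take i) := by
  simp [cword, surfaceWord, conjProd, List.prod_inv_reverse, Function.comp_def]

theorem surfRel_eq_surfaceWord (g : ℕ) :
    surfRel g = surfaceWord (genA g) (genB g) (List.finRange g) := by
  rw [surfRel, cword_eq_surfaceWord, List.take_of_length_le (by simp)]

theorem cword_add_self_half (n : ℕ) :
    cword (n + n) n =
      surfaceWord (genA (n + n) ∘ Fin.castAdd n) (genB (n + n) ∘ Fin.castAdd n)
        (List.finRange n) := by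
  rw [cword_eq_surfaceWord, List.finRange_add, List.take_left' (by simp), surfaceWord_map]

theorem cword_add_self (n : ℕ) :
    cword (n + n) (n + n) =
      (((List.finRange n).map (genB (n + n) ∘ Fin.natAdd n)).prod)⁻¹ * cword (n + n) n *
        conjProd (genA (n + n) ∘ Fin.natAdd n) (genB (n + n) ∘ Fin.natAdd n)
          (List.finRange n) := by
  rw [← surfRel, surfRel_eq_surfaceWord, List.finRange_add, surfaceWord_append,
    cword_add_self_half, surfaceWord_map, conjProd_map, List.map_map]

abbrev SurfaceGroup (n : ℕ) := PresentedGroup ({surfRel n} : Set (FreeGroup (SurfGen n)))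

namespace SurfaceGroup

variable (n : ℕ)

def a (k : Fin n) : SurfaceGroup n := PresentedGroup.of (Sum.inl k)

def b (k : Fin n) : SurfaceGroup n := PresentedGroup.of (Sum.inr k)

theorem prod_b_eq_conjProd :
    ((List.finRange n).map (b n)).prod = conjProd (a n) (b n) (List.finRange n) := by
  have h : PresentedGroup.mk {surfRel n} (surfaceWord (genA n) (genB n) (List.finRange n)) = 1 :=
    PresentedGroup.one_of_mem (surfRel_eq_surfaceWord n).symm
  rw [map_surfaceWord, surfaceWord_eq_one_iff] at h
  exact h

end SurfaceGroup

def foldRelators (g h : ℕ) (hle : h ≤ g) : Set (FreeGroup (SurfGen g)) :=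
  {surfRel g} ∪ {cword g g} ∪ {cword g h}
    ∪ Set.range (fun i : Fin h => genA g (Fin.castLE hle i) * genA g (Fin.castLE hle i).rev)
    ∪ Set.range (fun i : Fin h =>
        genB g (Fin.castLE hle i) * genA g (Fin.castLE hle i).rev *
          genB g (Fin.castLE hle i).rev * (genA g (Fin.castLE hle i).rev)⁻¹)

namespace Fold

open SurfaceGroup

variable (n : ℕ)

def gen : SurfGen (n + n) → SurfaceGroup n :=
  Sum.elim (Fin.addCases (fun i => (a n i.rev)⁻¹) (a n))
    (Fin.addCases (fun i => a n i.rev * (b n i.rev)⁻¹ * (a n i.rev)⁻¹) (b n))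

def hom : FreeGroup (SurfGen (n + n)) →* SurfaceGroup n := FreeGroup.lift (gen n)

theorem hom_genA_castAdd (i : Fin n) : hom n (genA _ (Fin.castAdd n i)) = (a n i.rev)⁻¹ := by
  simp [hom, gen, genA]

theorem hom_genB_castAdd (i : Fin n) :
    hom n (genB _ (Fin.castAdd n i)) = a n i.rev * (b n i.rev)⁻¹ * (a n i.rev)⁻¹ := by
  simp [hom, gen, genB]

theorem hom_genA_natAdd (k : Fin n) : hom n (genA _ (Fin.natAdd n k)) = a n k := by
  simp only [hom, gen, genA, FreeGroup.lift_apply_of, Sum.elim_inl, Fin.addCases_right]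

theorem hom_genB_natAdd (k : Fin n) : hom n (genB _ (Fin.natAdd n k)) = b n k := by
  simp only [hom, gen, genB, FreeGroup.lift_apply_of, Sum.elim_inr, Fin.addCases_right]

theorem hom_cword_half : hom n (cword (n + n) n) = 1 := by
  have hA : hom n ∘ genA _ ∘ Fin.castAdd n = (fun k => (a n k)⁻¹) ∘ Fin.rev :=
    funext (hom_genA_castAdd n)
  have hB : hom n ∘ genB _ ∘ Fin.castAdd n =
      (fun k => a n k * (b n k)⁻¹ * (a n k)⁻¹) ∘ Fin.rev :=
    funext (hom_genB_castAdd n)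
  rw [cword_add_self_half, map_surfaceWord, hA, hB,
    ← surfaceWord_map, ← List.finRange_reverse, surfaceWord_inv_conj_reverse,
    ← prod_b_eq_conjProd, mul_inv_cancel]

theorem hom_cword_self : hom n (cword (n + n) (n + n)) = 1 := by
  have hA : hom n ∘ genA _ ∘ Fin.natAdd n = a n := funext (hom_genA_natAdd n)
  have hB : hom n ∘ genB _ ∘ Fin.natAdd n = b n := funext (hom_genB_natAdd n)
  rw [cword_add_self, map_mul, map_mul, hom_cword_half, map_inv, map_list_prod, map_conjProd,
    List.map_map, hA, hB, prod_b_eq_conjProd]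
  group

theorem hom_eq_one_of_mem_foldRelators :
    ∀ r ∈ foldRelators (n + n) n (Nat.le_add_right n n), hom n r = 1 := by
  rintro r ((((rfl | rfl) | rfl) | ⟨i, rfl⟩) | ⟨i, rfl⟩)
  · exact hom_cword_self n
  · exact hom_cword_self n
  · exact hom_cword_half n
  · change hom n (genA _ (Fin.castAdd n i) * genA _ (Fin.castAdd n i).rev) = 1
    rw [Fin.rev_castAdd_eq_natAdd, map_mul, hom_genA_castAdd, hom_genA_natAdd, inv_mul_cancel]
  · change hom n (genB _ (Fin.castAdd n i) * genA _ (Fin.castAdd n i).rev *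
      genB _ (Fin.castAdd n i).rev * (genA _ (Fin.castAdd n i).rev)⁻¹) = 1
    simp only [Fin.rev_castAdd_eq_natAdd, map_mul, map_inv, hom_genB_castAdd, hom_genA_natAdd,
      hom_genB_natAdd]
    group

section Source

local notation "G" => PresentedGroup (foldRelators (n + n) n (Nat.le_add_right n n))

theorem of_inl_castAdd (i : Fin n) :
    (PresentedGroup.of (Sum.inl (Fin.castAdd n i)) : G) =
      (PresentedGroup.of (Sum.inl (Fin.natAdd n i.rev)))⁻¹ := by
  refine eq_inv_of_mul_eq_one_left ?_
  rw [← Fin.rev_castAdd_eq_natAdd]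
  exact PresentedGroup.one_of_mem (Or.inl (Or.inr ⟨i, rfl⟩))

theorem of_inr_castAdd (i : Fin n) :
    (PresentedGroup.of (Sum.inr (Fin.castAdd n i)) : G) =
      PresentedGroup.of (Sum.inl (Fin.natAdd n i.rev)) *
        (PresentedGroup.of (Sum.inr (Fin.natAdd n i.rev)))⁻¹ *
        (PresentedGroup.of (Sum.inl (Fin.natAdd n i.rev)))⁻¹ := by
  have h : (PresentedGroup.of (Sum.inr (Fin.castAdd n i)) : G) *
      (PresentedGroup.of (Sum.inl (Fin.natAdd n i.rev)) *
        PresentedGroup.of (Sum.inr (Fin.natAdd n i.rev)) *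
        (PresentedGroup.of (Sum.inl (Fin.natAdd n i.rev)))⁻¹) = 1 := by
    rw [← Fin.rev_castAdd_eq_natAdd, ← mul_assoc, ← mul_assoc]
    exact PresentedGroup.one_of_mem (Or.inr ⟨i, rfl⟩)
  rw [eq_inv_of_mul_eq_one_left h]
  group

def unfoldGen : SurfGen n → G :=
  fun x => PresentedGroup.of (Sum.map (Fin.natAdd n) (Fin.natAdd n) x)

theorem lift_unfoldGen_eq_one_of_mem :
    ∀ s ∈ ({surfRel n} : Set (FreeGroup (SurfGen n))), FreeGroup.lift (unfoldGen n) s = 1 := by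
  rintro s rfl
  have hdouble : (PresentedGroup.mk _ (cword (n + n) (n + n)) : G) = 1 :=
    PresentedGroup.one_of_mem (Or.inl (Or.inl (Or.inl (Or.inr rfl))))
  have hhalf : (PresentedGroup.mk _ (cword (n + n) n) : G) = 1 :=
    PresentedGroup.one_of_mem (Or.inl (Or.inl (Or.inr rfl)))
  rw [cword_add_self, map_mul, map_mul, hhalf, mul_one, map_inv, map_list_prod, map_conjProd,
    List.map_map] at hdouble
  rw [surfRel_eq_surfaceWord, map_surfaceWord]
  exact hdouble

theorem toGroup_gen (x : SurfGen (n + n)) :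
    PresentedGroup.toGroup (lift_unfoldGen_eq_one_of_mem n) (gen n x) = PresentedGroup.of x := by
  rcases x with i | i <;> induction i using Fin.addCases <;>
    simp only [gen, a, b, Sum.elim_inl, Sum.elim_inr, Fin.addCases_left, Fin.addCases_right,
      map_mul, map_inv, PresentedGroup.toGroup.of, unfoldGen, Sum.map_inl, Sum.map_inr,
      of_inl_castAdd, of_inr_castAdd]

theorem toGroup_unfoldGen (y : SurfGen n) :
    PresentedGroup.toGroup (hom_eq_one_of_mem_foldRelators n) (unfoldGen n y) =
      PresentedGroup.of y := by
  rcases y with k | k <;>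
    simp only [unfoldGen, Sum.map_inl, Sum.map_inr, PresentedGroup.toGroup.of, gen, Sum.elim_inl,
      Sum.elim_inr, Fin.addCases_right, a, b]

end Source

def mulEquiv : PresentedGroup (foldRelators (n + n) n (Nat.le_add_right n n)) ≃* SurfaceGroup n :=
  PresentedGroup.mulEquivOfToGroupInverse (hom_eq_one_of_mem_foldRelators n)
    (lift_unfoldGen_eq_one_of_mem n)
    (toGroup_gen n) (toGroup_unfoldGen n)

end Fold

theorem foldRelators_nonempty_mulEquiv (g h : ℕ) (hgh : g = h + h) (hle : h ≤ g) :
    Nonempty (PresentedGroup (foldRelators g h hle) ≃* SurfaceGroup h) := by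
  subst hgh
  exact ⟨Fold.mulEquiv h⟩

theorem stmt4_general (g : ℕ) (heven : Even g) :
    Nonempty (PresentedGroup
      (({surfRel g} ∪ {cword g g} ∪ {cword g (g / 2)}
        ∪ Set.range (fun i : Fin (g / 2) =>
            genA g (Fin.castLE (Nat.div_le_self g 2) i) *
              genA g ((Fin.castLE (Nat.div_le_self g 2) i).rev))
        ∪ Set.range (fun i : Fin (g / 2) =>
            genB g (Fin.castLE (Nat.div_le_self g 2) i) *
              genA g ((Fin.castLE (Nat.div_le_self g 2) i).rev) *
              genB g ((Fin.castLE (Nat.div_le_self g 2) i).rev) *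
              (genA g ((Fin.castLE (Nat.div_le_self g 2) i).rev))⁻¹)) :
        Set (FreeGroup (SurfGen g)))
      ≃* PresentedGroup ({surfRel (g / 2)} : Set (FreeGroup (SurfGen (g / 2))))) :=
  foldRelators_nonempty_mulEquiv g (g / 2) (by obtain ⟨m, rfl⟩ := heven; omega) _

/-- for even `g ≥ 2`, the presented group
`⟨a_1, b_1, …, a_g, b_g ∣ r_g, c_g, c_{g/2}, a_i a_{g+1-i} (1 ≤ i ≤ g/2),
b_i a_{g+1-i} b_{g+1-i} a_{g+1-i}⁻¹ (1 ≤ i ≤ g/2)⟩` is isomorphic to the genus-`(g/2)`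
surface group. -/
theorem stmt4 (g : ℕ) (hg : 2 ≤ g) (heven : Even g) :
    Nonempty (PresentedGroup
      (({surfRel g} ∪ {cword g g} ∪ {cword g (g / 2)}
        ∪ Set.range (fun i : Fin (g / 2) =>
            genA g (Fin.castLE (Nat.div_le_self g 2) i) *
              genA g ((Fin.castLE (Nat.div_le_self g 2) i).rev))
        ∪ Set.range (fun i : Fin (g / 2) =>
            genB g (Fin.castLE (Nat.div_le_self g 2) i) *
              genA g ((Fin.castLE (Nat.div_le_self g 2) i).rev) *
              genB g ((Fin.castLE (Nat.div_le_self g 2) i).rev) *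
              (genA g ((Fin.castLE (Nat.div_le_self g 2) i).rev))⁻¹)) :
        Set (FreeGroup (SurfGen g)))
      ≃* PresentedGroup ({surfRel (g / 2)} : Set (FreeGroup (SurfGen (g / 2))))) :=
  stmt4_general g heven
end

section
/- Let G be a group, let g ≥ 1 be an integer, and let x, y ∈ G satisfy y^{2g+2} = 1 and (xy)^{2g+1} = y^{2g+2}. Define σ_i = y^{i−1} x y^{1−i} for 1 ≤ i ≤ 2g+1. Then (σ_1 σ_2 ⋯ σ_{2g+1})(σ_{2g+1} ⋯ σ_2 σ_1) = (y^{−1} x)^{2g+1}. -/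
section ConjugatePowers

variable {G : Type*} [Group G]

theorem List.prod_map_range_conj_pow (x y : G) (n : ℕ) :
    ((List.range n).map fun j => y ^ j * x * (y ^ j)⁻¹).prod = (x * y) ^ n * (y ^ n)⁻¹ := by
  induction n with
  | zero => simp
  | succ n ih =>
    rw [List.range_succ, List.map_append, List.prod_append, ih]
    simp only [List.map_cons, List.map_nil, List.prod_cons, List.prod_nil, mul_one]
    rw [pow_succ (x * y)]
    group

theorem List.prod_map_reverse_range_conj_pow (x y : G) (n : ℕ) :
    ((List.range n).reverse.map fun j => y ^ j * x * (y ^ j)⁻¹).prod = y ^ n * (y⁻¹ * x) ^ n := by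
  induction n with
  | zero => simp
  | succ n ih =>
    rw [List.range_succ, List.reverse_append, List.map_append, List.prod_append, ih]
    simp only [List.reverse_cons, List.reverse_nil, List.nil_append, List.map_cons,
      List.map_nil, List.prod_cons, List.prod_nil, mul_one]
    rw [pow_succ' (y⁻¹ * x), pow_succ]
    simp only [mul_assoc, inv_mul_cancel_left, mul_inv_cancel_left]

theorem List.prod_map_range_conj_pow_mul_reverse (x y : G) (n : ℕ) :
    ((List.range n).map fun j => y ^ j * x * (y ^ j)⁻¹).prod *
        ((List.range n).reverse.map fun j => y ^ j * x * (y ^ j)⁻¹).prod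
      = (x * y) ^ n * (y⁻¹ * x) ^ n := by
  rw [List.prod_map_range_conj_pow, List.prod_map_reverse_range_conj_pow]
  group

end ConjugatePowers

theorem stmt7_general (G : Type*) [Group G] (g : ℕ) (x y : G)
    (h1 : y ^ (2 * g + 2) = 1) (h2 : (x * y) ^ (2 * g + 1) = y ^ (2 * g + 2)) :
    ((List.range (2 * g + 1)).map fun j => y ^ j * x * (y ^ j)⁻¹).prod *
        ((List.range (2 * g + 1)).reverse.map fun j => y ^ j * x * (y ^ j)⁻¹).prod
      = (y⁻¹ * x) ^ (2 * g + 1) := by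
  rw [List.prod_map_range_conj_pow_mul_reverse, h2, h1, one_mul]

/-- if `y^{2g+2} = 1` and `(xy)^{2g+1} = y^{2g+2}` in a group `G`, with
`σ_i = y^{i-1} x y^{1-i}` for `1 ≤ i ≤ 2g+1` (below `σ_{j+1} = y^j * x * (y^j)⁻¹` in
`0`-based indexing), then `(σ_1 σ_2 ⋯ σ_{2g+1})(σ_{2g+1} ⋯ σ_2 σ_1) = (y⁻¹ x)^{2g+1}`. -/
theorem stmt7 (G : Type*) [Group G] (g : ℕ) (hg : 1 ≤ g) (x y : G)
    (h1 : y ^ (2 * g + 2) = 1) (h2 : (x * y) ^ (2 * g + 1) = y ^ (2 * g + 2)) :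
    ((List.range (2 * g + 1)).map fun j => y ^ j * x * (y ^ j)⁻¹).prod *
        ((List.range (2 * g + 1)).reverse.map fun j => y ^ j * x * (y ^ j)⁻¹).prod
      = (y⁻¹ * x) ^ (2 * g + 1) :=
  stmt7_general G g x y h1 h2
end

section
/- Let G be a group, let g ≥ 1 be an integer, and let x, y ∈ G satisfy y^{2g+2} = 1 and (xy)^{2g+1} = y^{2g+2}. Define σ_i = y^{i−1} x y^{1−i} for 1 ≤ i ≤ 2g+1, and let P = (σ_1 σ_2 ⋯ σ_{2g+1})(σ_{2g+1} ⋯ σ_2 σ_1). Then the commutator [P, σ_1] = P σ_1 P^{−1} σ_1^{−1} equals (y^{−1} x)^{2g+1} (y x^{−1})^{2g+1}. -/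
/-!
The product `σ_1 ⋯ σ_n` telescopes to `(x y)^n y^{-n}` and `σ_n ⋯ σ_1` to `y^n (y⁻¹ x)^n`, so
`P = (x y)^n (y⁻¹ x)^n`. For `n = 2g+1` the hypotheses give `(x y)^n = 1`, hence
`P = (y⁻¹ x)^n`, and then `[P, x] = P · x P⁻¹ x⁻¹` with `x P⁻¹ x⁻¹ = x (x⁻¹ y)^n x⁻¹ = (y x⁻¹)^n`.
-/

section

variable {G : Type*} [Group G]

theorem conj_inv_pow_inv_mul (x y : G) (n : ℕ) :
    x * ((y⁻¹ * x) ^ n)⁻¹ * x⁻¹ = (y * x⁻¹) ^ n := by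
  rw [← inv_pow, mul_inv_rev, inv_inv, ← conj_pow]
  group

end

theorem stmt8_general (G : Type*) [Group G] (g : ℕ) (x y : G)
    (h1 : y ^ (2 * g + 2) = 1) (h2 : (x * y) ^ (2 * g + 1) = y ^ (2 * g + 2))
    (P : G)
    (hP : P = ((List.range (2 * g + 1)).map fun j => y ^ j * x * (y ^ j)⁻¹).prod *
        ((List.range (2 * g + 1)).reverse.map fun j => y ^ j * x * (y ^ j)⁻¹).prod) :
    P * x * P⁻¹ * x⁻¹ = (y⁻¹ * x) ^ (2 * g + 1) * (y * x⁻¹) ^ (2 * g + 1) := by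
  have hxy : (x * y) ^ (2 * g + 1) = 1 := h2.trans h1
  have hP' : P = (y⁻¹ * x) ^ (2 * g + 1) := by
    rw [hP, List.prod_map_range_conj_pow, List.prod_map_reverse_range_conj_pow, hxy]
    group
  calc P * x * P⁻¹ * x⁻¹ = P * (x * P⁻¹ * x⁻¹) := by group
    _ = (y⁻¹ * x) ^ (2 * g + 1) * (y * x⁻¹) ^ (2 * g + 1) := by
      rw [hP', conj_inv_pow_inv_mul]

/-- if `y^{2g+2} = 1` and `(xy)^{2g+1} = y^{2g+2}` in a group `G`, with
`σ_i = y^{i-1} x y^{1-i}` for `1 ≤ i ≤ 2g+1` (below `σ_{j+1} = y^j * x * (y^j)⁻¹` in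
`0`-based indexing, so `σ_1 = x`) and `P = (σ_1 σ_2 ⋯ σ_{2g+1})(σ_{2g+1} ⋯ σ_2 σ_1)`, then
`[P, σ_1] = P σ_1 P⁻¹ σ_1⁻¹ = (y⁻¹ x)^{2g+1} (y x⁻¹)^{2g+1}`. -/
theorem stmt8 (G : Type*) [Group G] (g : ℕ) (hg : 1 ≤ g) (x y : G)
    (h1 : y ^ (2 * g + 2) = 1) (h2 : (x * y) ^ (2 * g + 1) = y ^ (2 * g + 2))
    (P : G)
    (hP : P = ((List.range (2 * g + 1)).map fun j => y ^ j * x * (y ^ j)⁻¹).prod *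
        ((List.range (2 * g + 1)).reverse.map fun j => y ^ j * x * (y ^ j)⁻¹).prod) :
    P * x * P⁻¹ * x⁻¹ = (y⁻¹ * x) ^ (2 * g + 1) * (y * x⁻¹) ^ (2 * g + 1) :=
  stmt8_general G g x y h1 h2 P hP
end

section
/- Let n ≥ 3. The presented group with generators σ_1, …, σ_{n−1} and relators σ_i σ_j σ_i^{−1} σ_j^{−1} for 1 ≤ i < j − 1 ≤ n − 2 and σ_i σ_{i+1} σ_i σ_{i+1}^{−1} σ_i^{−1} σ_{i+1}^{−1} for 1 ≤ i ≤ n − 2 (the n-strand braid group B_n) is isomorphic to the presented group with generators x, y and relators x y^k x y^{−k} x^{−1} y^k x^{−1} y^{−k} for 2 ≤ k ≤ n − 2, x y x y^{−1} x y x^{−1} y^{−1} x^{−1} y x^{−1} y^{−1}, and (xy)^{n−1} y^{−n}, via an isomorphism sending σ_i to y^{i−1} x y^{1−i} for each 1 ≤ i ≤ n − 1. -/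
/-- The generator `σ_{i+1}` (`0`-based indexing) as an element of the free group on `Fin N`. -/
def S (N : ℕ) (i : Fin N) : FreeGroup (Fin N) := FreeGroup.of i

/-- The braid relators on `N` generators `σ_1, …, σ_N`:
`σ_i σ_j σ_i⁻¹ σ_j⁻¹` for `i < j - 1` and `σ_i σ_{i+1} σ_i σ_{i+1}⁻¹ σ_i⁻¹ σ_{i+1}⁻¹`. -/
def braidRels (N : ℕ) : Set (FreeGroup (Fin N)) :=
  {w | (∃ i j : Fin N, (i : ℕ) + 1 < (j : ℕ) ∧
          w = S N i * S N j * (S N i)⁻¹ * (S N j)⁻¹)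
     ∨ (∃ i j : Fin N, (j : ℕ) = (i : ℕ) + 1 ∧
          w = S N i * S N j * S N i * (S N j)⁻¹ * (S N i)⁻¹ * (S N j)⁻¹)}

/-- `x` in the two-generator presentation. -/
def X : FreeGroup Bool := FreeGroup.of true

/-- `y` in the two-generator presentation. -/
def Y : FreeGroup Bool := FreeGroup.of false

/-- The two-generator relators of `B_n`:
`x y^k x y^{-k} x⁻¹ y^k x⁻¹ y^{-k}` for `2 ≤ k ≤ n-2`,
`x y x y⁻¹ x y x⁻¹ y⁻¹ x⁻¹ y x⁻¹ y⁻¹`, and `(xy)^{n-1} y^{-n}`. -/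
def xyBraidRels (n : ℕ) : Set (FreeGroup Bool) :=
  {w | (∃ k : ℕ, 2 ≤ k ∧ k ≤ n - 2 ∧
          w = X * Y ^ k * X * (Y ^ k)⁻¹ * X⁻¹ * Y ^ k * X⁻¹ * (Y ^ k)⁻¹)
     ∨ w = X * Y * X * Y⁻¹ * X * Y * X⁻¹ * Y⁻¹ * X⁻¹ * Y * X⁻¹ * Y⁻¹
     ∨ w = (X * Y) ^ (n - 1) * (Y ^ n)⁻¹}


/-!
Put `δ = σ₁ ⋯ σ_{n-1}`. The braid relations give `δ σ_i δ⁻¹ = σ_{i+1}` for `i ≤ n - 2`, hence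
`σ_{i+1} = δ^i σ₁ δ^{-i}`, and `(σ₁ δ)^m = (σ₁ ⋯ σ_m) δ^m` for `m ≤ n - 1`, in particular
`(σ₁ δ)^{n-1} = δ^n`. So `x ↦ σ₁`, `y ↦ δ` respects the two-generator relators. Conversely the
elements `y^k x y^{-k}` satisfy the braid relations, all of them being conjugates (by powers of `y`)
of the relations between `x` and `y^k x y^{-k}`. The two maps are mutually inverse on generators:
`δ^i σ₁ δ^{-i} = σ_{i+1}`, and `∏_{k < n-1} y^k x y^{-k} = (xy)^{n-1} y^{-(n-1)} = y` by the last
relator.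
-/

section Words
variable {G : Type*} [Group G]

lemma commutator_word_eq_one_iff {a b : G} : a * b * a⁻¹ * b⁻¹ = 1 ↔ Commute a b := by
  rw [← commutatorElement_def, commutatorElement_eq_one_iff_commute]

lemma braid_word_eq_one_iff {a b : G} :
    a * b * a * b⁻¹ * a⁻¹ * b⁻¹ = 1 ↔ a * b * a = b * a * b := by
  rw [show a * b * a * b⁻¹ * a⁻¹ * b⁻¹ = a * b * a * (b * a * b)⁻¹ by group, mul_inv_eq_one]

end Words

section BraidRelations
variable {G H : Type*} [Group G] [Group H]

structure BraidRelations (s : ℕ → G) (N : ℕ) : Prop where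
  comm : ∀ {a b : ℕ}, a + 1 < b → b < N → Commute (s a) (s b)
  braid : ∀ {a : ℕ}, a + 1 < N → s a * s (a + 1) * s a = s (a + 1) * s a * s (a + 1)

def prefixProd (s : ℕ → G) (m : ℕ) : G := ((List.range m).map s).prod

@[simp]
lemma prefixProd_zero (s : ℕ → G) : prefixProd s 0 = 1 := rfl

lemma prefixProd_succ (s : ℕ → G) (m : ℕ) : prefixProd s (m + 1) = prefixProd s m * s m := by
  simp [prefixProd, List.range_succ]

lemma prefixProd_congr {s t : ℕ → G} {m : ℕ} (h : ∀ k < m, s k = t k) :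
    prefixProd s m = prefixProd t m :=
  congrArg List.prod (List.map_congr_left fun k hk => h k (List.mem_range.mp hk))

lemma map_prefixProd (f : G →* H) (s : ℕ → G) (m : ℕ) :
    f (prefixProd s m) = prefixProd (f ∘ s) m := by
  simp [prefixProd, map_list_prod]

lemma prefixProd_conj_pow (x y : G) (m : ℕ) :
    prefixProd (fun k => MulAut.conj (y ^ k) x) m = (x * y) ^ m * (y ^ m)⁻¹ := by
  induction m with
  | zero => simp
  | succ m ih =>
    rw [prefixProd_succ, ih, MulAut.conj_apply, pow_succ, pow_succ]
    group

namespace BraidRelations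
variable {s : ℕ → G} {N : ℕ}

lemma commute_prefixProd (h : BraidRelations s N) {a b : ℕ} (hab : a < b) (hb : b < N) :
    Commute (prefixProd s a) (s b) := by
  induction a with
  | zero => exact Commute.one_left _
  | succ a ih =>
    rw [prefixProd_succ]
    exact (ih (by omega)).mul_left (h.comm (by omega) hb)

lemma prefixProd_mul_eq (h : BraidRelations s N) {i m : ℕ} (him : i + 1 < m) (hm : m ≤ N) :
    prefixProd s m * s i = s (i + 1) * prefixProd s m := by
  induction m, him using Nat.le_induction with
  | base =>
    have hP := h.commute_prefixProd (Nat.lt_succ_self i) (by omega)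
    calc prefixProd s (i + 2) * s i
        = prefixProd s i * (s i * s (i + 1) * s i) := by
          simp only [prefixProd_succ, mul_assoc]
      _ = (prefixProd s i * s (i + 1)) * s i * s (i + 1) := by
          rw [h.braid (by omega)]; simp only [mul_assoc]
      _ = s (i + 1) * prefixProd s (i + 2) := by
          rw [hP.eq, prefixProd_succ, prefixProd_succ]; simp only [mul_assoc]
  | succ m him ih =>
    calc prefixProd s (m + 1) * s i = prefixProd s m * s i * s m := by
          rw [prefixProd_succ, mul_assoc, ← (h.comm (a := i) (b := m) (by omega) (by omega)).eq,
            mul_assoc]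
      _ = s (i + 1) * prefixProd s (m + 1) := by
          rw [ih (by omega), prefixProd_succ, mul_assoc]

lemma prefixProd_pow_mul_eq (h : BraidRelations s N) {i : ℕ} (hi : i < N) :
    prefixProd s N ^ i * s 0 = s i * prefixProd s N ^ i := by
  induction i with
  | zero => simp
  | succ i ih =>
    rw [pow_succ', mul_assoc, ih (by omega), ← mul_assoc, h.prefixProd_mul_eq (by omega) le_rfl,
      mul_assoc]

lemma conj_prefixProd_pow (h : BraidRelations s N) {i : ℕ} (hi : i < N) :
    MulAut.conj (prefixProd s N ^ i) (s 0) = s i := by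
  rw [MulAut.conj_apply, h.prefixProd_pow_mul_eq hi, mul_inv_cancel_right]

lemma mul_prefixProd_pow (h : BraidRelations s N) {m : ℕ} (hm : m ≤ N) :
    (s 0 * prefixProd s N) ^ m = prefixProd s m * prefixProd s N ^ m := by
  induction m with
  | zero => simp
  | succ m ih =>
    calc (s 0 * prefixProd s N) ^ (m + 1)
        = prefixProd s m * (prefixProd s N ^ m * s 0) * prefixProd s N := by
          rw [pow_succ, ih (by omega)]; simp only [mul_assoc]
      _ = prefixProd s (m + 1) * prefixProd s N ^ (m + 1) := by
          rw [h.prefixProd_pow_mul_eq (by omega), prefixProd_succ, pow_succ]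
          simp only [mul_assoc]

end BraidRelations

lemma braidRelations_iff {s : ℕ → G} {N : ℕ} :
    BraidRelations s N ↔ ∀ r ∈ braidRels N, FreeGroup.lift (fun i : Fin N => s i) r = 1 := by
  constructor
  · rintro h r (⟨i, j, hij, rfl⟩ | ⟨i, j, hij, rfl⟩)
    · simpa [S, commutator_word_eq_one_iff] using h.comm hij j.isLt
    · have hbraid := h.braid (hij ▸ j.isLt)
      rw [← hij] at hbraid
      simpa [S, braid_word_eq_one_iff] using hbraid
  · intro h
    refine ⟨fun {a b} hab hb => ?_, fun {a} ha => ?_⟩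
    · have := h _ (Or.inl ⟨⟨a, by omega⟩, ⟨b, hb⟩, hab, rfl⟩)
      simpa [S, commutator_word_eq_one_iff] using this
    · have := h _ (Or.inr ⟨⟨a, by omega⟩, ⟨a + 1, ha⟩, rfl, rfl⟩)
      simpa [S, braid_word_eq_one_iff] using this

end BraidRelations

section XYBraidRelations
variable {G : Type*} [Group G]

structure XYBraidRelations (n : ℕ) (x y : G) : Prop where
  comm : ∀ {k : ℕ}, 2 ≤ k → k ≤ n - 2 → Commute x (MulAut.conj (y ^ k) x)
  braid : x * MulAut.conj y x * x = MulAut.conj y x * x * MulAut.conj y x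
  pow : (x * y) ^ (n - 1) = y ^ n

lemma conj_pow_add (x y : G) (a k : ℕ) :
    MulAut.conj (y ^ (a + k)) x = MulAut.conj (y ^ a) (MulAut.conj (y ^ k) x) := by
  rw [pow_add, map_mul, MulAut.mul_apply]

lemma XYBraidRelations.braidRelations {n : ℕ} {x y : G} (h : XYBraidRelations n x y) :
    BraidRelations (fun k => MulAut.conj (y ^ k) x) (n - 1) := by
  refine ⟨fun {a b} hab hb => ?_, fun {a} ha => ?_⟩
  · obtain ⟨k, rfl⟩ : ∃ k, b = a + k := ⟨b - a, by omega⟩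
    have hcomm := (h.comm (k := k) (by omega) (by omega)).map (MulAut.conj (y ^ a))
    simpa only [conj_pow_add, pow_zero, map_one, MulAut.one_apply, add_zero] using hcomm
  · have hbraid := congrArg (MulAut.conj (y ^ a)) h.braid
    simp only [map_mul] at hbraid
    simpa only [conj_pow_add, pow_one] using hbraid

lemma xyBraidRelations_iff {n : ℕ} {x y : G} :
    XYBraidRelations n x y ↔ ∀ r ∈ xyBraidRels n, FreeGroup.lift (fun b => cond b x y) r = 1 := by
  have comm_word (k : ℕ) : x * y ^ k * x * (y ^ k)⁻¹ * x⁻¹ * y ^ k * x⁻¹ * (y ^ k)⁻¹ = 1 ↔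
      Commute x (MulAut.conj (y ^ k) x) := by
    rw [← commutator_word_eq_one_iff, MulAut.conj_apply]
    group
  have braid_word : x * y * x * y⁻¹ * x * y * x⁻¹ * y⁻¹ * x⁻¹ * y * x⁻¹ * y⁻¹ = 1 ↔
      x * MulAut.conj y x * x = MulAut.conj y x * x * MulAut.conj y x := by
    rw [← braid_word_eq_one_iff, MulAut.conj_apply]
    group
  constructor
  · rintro h r (⟨k, hk2, hkn, rfl⟩ | rfl | rfl)
    · simpa [X, Y, comm_word] using h.comm hk2 hkn
    · simpa [X, Y, braid_word] using h.braid
    · simpa [X, Y, mul_inv_eq_one] using h.pow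
  · intro h
    refine ⟨fun {k} hk2 hkn => ?_, ?_, ?_⟩
    · simpa [X, Y, comm_word] using h _ (Or.inl ⟨k, hk2, hkn, rfl⟩)
    · simpa [X, Y, braid_word] using h _ (Or.inr (Or.inl rfl))
    · simpa [X, Y, mul_inv_eq_one] using h _ (Or.inr (Or.inr rfl))

lemma BraidRelations.xyBraidRelations {n : ℕ} {s : ℕ → G} (h : BraidRelations s (n - 1))
    (hn : 3 ≤ n) : XYBraidRelations n (s 0) (prefixProd s (n - 1)) := by
  refine ⟨fun {k} hk2 hkn => ?_, ?_, ?_⟩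
  · rw [h.conj_prefixProd_pow (by omega)]
    exact h.comm (by omega) (by omega)
  · have hconj := h.conj_prefixProd_pow (i := 1) (by omega)
    rw [pow_one] at hconj
    rw [hconj]
    exact h.braid (by omega)
  · rw [h.mul_prefixProd_pow le_rfl, ← pow_succ', Nat.sub_add_cancel (by omega)]

end XYBraidRelations

/-- `σ_{k+1}` in `PresentedGroup (braidRels N)`, with the junk value `1` for `k ≥ N`. -/
def braidGen (N k : ℕ) : PresentedGroup (braidRels N) :=
  if h : k < N then .of ⟨k, h⟩ else 1

lemma braidGen_coe {N : ℕ} (i : Fin N) : braidGen N i = .of i := by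
  simp [braidGen, i.isLt]

lemma braidRelations_braidGen (N : ℕ) : BraidRelations (braidGen N) N := by
  have lift_eq : FreeGroup.lift (fun i : Fin N => braidGen N i) = PresentedGroup.mk _ :=
    FreeGroup.ext_hom _ _ fun i => by rw [FreeGroup.lift_apply_of, braidGen_coe]; rfl
  exact braidRelations_iff.mpr fun r hr => by rw [lift_eq]; exact PresentedGroup.one_of_mem hr

lemma xyBraidRelations_of (n : ℕ) :
    XYBraidRelations n (.of true : PresentedGroup (xyBraidRels n)) (.of false) := by
  have lift_eq : FreeGroup.lift (fun b => cond b (.of true) (.of false)) =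
      PresentedGroup.mk (xyBraidRels n) :=
    FreeGroup.ext_hom _ _ fun b => by cases b <;> rfl
  exact xyBraidRelations_iff.mpr fun r hr => by rw [lift_eq]; exact PresentedGroup.one_of_mem hr

def braidToXY (n : ℕ) : PresentedGroup (braidRels (n - 1)) →* PresentedGroup (xyBraidRels n) :=
  PresentedGroup.toGroup (braidRelations_iff.mp (xyBraidRelations_of n).braidRelations)

def xyToBraid {n : ℕ} (hn : 3 ≤ n) :
    PresentedGroup (xyBraidRels n) →* PresentedGroup (braidRels (n - 1)) :=
  PresentedGroup.toGroup (xyBraidRelations_iff.mp ((braidRelations_braidGen _).xyBraidRelations hn))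

lemma braidToXY_of {n : ℕ} (i : Fin (n - 1)) :
    braidToXY n (.of i) = MulAut.conj (.of false ^ (i : ℕ)) (.of true) :=
  PresentedGroup.toGroup.of _

lemma xyToBraid_comp_braidToXY {n : ℕ} (hn : 3 ≤ n) :
    (xyToBraid hn).comp (braidToXY n) = MonoidHom.id _ := by
  refine PresentedGroup.ext fun i => ?_
  rw [MonoidHom.comp_apply, braidToXY_of, MulAut.conj_apply]
  simp only [map_mul, map_inv, map_pow, xyToBraid, PresentedGroup.toGroup.of, cond_true,
    cond_false, MonoidHom.id_apply]
  rw [← MulAut.conj_apply, (braidRelations_braidGen _).conj_prefixProd_pow i.isLt, braidGen_coe]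

lemma braidToXY_comp_xyToBraid {n : ℕ} (hn : 3 ≤ n) :
    (braidToXY n).comp (xyToBraid hn) = MonoidHom.id _ := by
  have braidToXY_braidGen (k : ℕ) (hk : k < n - 1) :
      braidToXY n (braidGen (n - 1) k) = MulAut.conj (.of false ^ k) (.of true) :=
    (congrArg _ (braidGen_coe ⟨k, hk⟩)).trans (braidToXY_of _)
  refine PresentedGroup.ext fun b => ?_
  cases b
  · simp only [MonoidHom.comp_apply, xyToBraid, PresentedGroup.toGroup.of, cond_false,
      MonoidHom.id_apply]
    rw [map_prefixProd, prefixProd_congr (s := braidToXY n ∘ braidGen (n - 1)) braidToXY_braidGen, prefixProd_conj_pow,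
      (xyBraidRelations_of n).pow, ← Nat.sub_add_cancel (show 1 ≤ n by omega), pow_succ',
      Nat.add_sub_cancel, mul_inv_cancel_right]
  · simp only [MonoidHom.comp_apply, xyToBraid, PresentedGroup.toGroup.of, cond_true,
      MonoidHom.id_apply]
    rw [braidToXY_braidGen 0 (by omega), pow_zero, map_one, MulAut.one_apply]

/-- for `n ≥ 3`, the braid group `B_n` on its Artin generators
`σ_1, …, σ_{n-1}` is isomorphic to the two-generator presented group, via an isomorphism
sending `σ_i` to `y^{i-1} x y^{1-i}` for each `1 ≤ i ≤ n-1`. -/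
theorem stmt9 (n : ℕ) (hn : 3 ≤ n) :
    ∃ e : PresentedGroup (braidRels (n - 1)) ≃* PresentedGroup (xyBraidRels n),
      ∀ i : Fin (n - 1),
        e (PresentedGroup.of i)
          = (PresentedGroup.of false : PresentedGroup (xyBraidRels n)) ^ (i : ℕ) *
              PresentedGroup.of true *
              ((PresentedGroup.of false : PresentedGroup (xyBraidRels n)) ^ (i : ℕ))⁻¹ :=
  ⟨MonoidHom.toMulEquiv _ _ (xyToBraid_comp_braidToXY hn) (braidToXY_comp_xyToBraid hn),
    fun i => braidToXY_of i⟩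
end

section
/- Let n ≥ 3. The presented group with generators σ_1, …, σ_{n−1} and relators σ_i σ_j σ_i^{−1} σ_j^{−1} for 1 ≤ i < j − 1 ≤ n − 2, σ_i σ_{i+1} σ_i σ_{i+1}^{−1} σ_i^{−1} σ_{i+1}^{−1} for 1 ≤ i ≤ n − 2, (σ_1 ⋯ σ_{n−1})^n, and σ_1 ⋯ σ_{n−1} σ_{n−1} ⋯ σ_1 (Magnus's presentation of the mapping class group of the n-punctured sphere) is isomorphic to the presented group with generators x, y and relators x y^k x y^{−k} x^{−1} y^k x^{−1} y^{−k} for 2 ≤ k ≤ n − 2, x y x y^{−1} x y x^{−1} y^{−1} x^{−1} y x^{−1} y^{−1}, (xy)^{n−1} y^{−n}, y^n, and (y^{−1} x)^{n−1}, via an isomorphism sending σ_i to y^{i−1} x y^{1−i} for each 1 ≤ i ≤ n − 1. -/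
/-- The word `σ_1 σ_2 ⋯ σ_N`. -/
def deltaWord (N : ℕ) : FreeGroup (Fin N) := ((List.finRange N).map (S N)).prod

/-- The word `σ_N ⋯ σ_2 σ_1`. -/
def deltaRevWord (N : ℕ) : FreeGroup (Fin N) :=
  ((List.finRange N).reverse.map (S N)).prod

/-- Magnus's relators for the mapping class group of the `n`-punctured sphere, on the
generators `σ_1, …, σ_{n-1}`. -/
def sphereRels (n : ℕ) : Set (FreeGroup (Fin (n - 1))) :=
  {w | (∃ i j : Fin (n - 1), (i : ℕ) + 1 < (j : ℕ) ∧
          w = S _ i * S _ j * (S _ i)⁻¹ * (S _ j)⁻¹)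
     ∨ (∃ i j : Fin (n - 1), (j : ℕ) = (i : ℕ) + 1 ∧
          w = S _ i * S _ j * S _ i * (S _ j)⁻¹ * (S _ i)⁻¹ * (S _ j)⁻¹)
     ∨ w = deltaWord (n - 1) ^ n
     ∨ w = deltaWord (n - 1) * deltaRevWord (n - 1)}

/-- The two-generator relators of the mapping class group of the `n`-punctured sphere. -/
def xySphereRels (n : ℕ) : Set (FreeGroup Bool) :=
  {w | (∃ k : ℕ, 2 ≤ k ∧ k ≤ n - 2 ∧
          w = X * Y ^ k * X * (Y ^ k)⁻¹ * X⁻¹ * Y ^ k * X⁻¹ * (Y ^ k)⁻¹)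
     ∨ w = X * Y * X * Y⁻¹ * X * Y * X⁻¹ * Y⁻¹ * X⁻¹ * Y * X⁻¹ * Y⁻¹
     ∨ w = (X * Y) ^ (n - 1) * (Y ^ n)⁻¹
     ∨ w = Y ^ n
     ∨ w = (Y⁻¹ * X) ^ (n - 1)}

/-!
Put `Δ = σ_1 ⋯ σ_{n-1}`. The commutation and braid relations give `Δ σ_i Δ⁻¹ = σ_{i+1}`, hence
`σ_{i+1} = Δ^i σ_1 Δ^{-i}`, so Magnus's group is generated by `σ_1` and `Δ`. Conversely, in the
two-generator group the conjugates `y^i x y^{-i}` satisfy Magnus's commutation and braid relations,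
being conjugates by `y^i` of those between `x` and `y^k x y^{-k}`. The relations involving `Δ`
correspond to each other through the telescoping identities
`∏_{i<k} y^i x y^{-i} = (x y)^k y^{-k}` and `∏_{i<k} y^{k-1-i} x y^{-(k-1-i)} = y^k (y⁻¹ x)^k`,
which also show that `σ_1 ⋯ σ_{n-1} ↦ y`. Hence `σ_{i+1} ↦ y^i x y^{-i}` and `x ↦ σ_1`, `y ↦ Δ`
are mutually inverse homomorphisms.
-/

section GroupIdentities

variable {G : Type*} [Group G]

theorem list_prod_map_range_conj_pow (x y : G) (k : ℕ) :
    ((List.range k).map fun i => y ^ i * x * (y ^ i)⁻¹).prod = (x * y) ^ k * (y ^ k)⁻¹ := by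
  induction k with
  | zero => simp
  | succ k ih =>
    rw [List.range_succ, List.map_append, List.prod_append, ih, List.map_singleton,
      List.prod_singleton, pow_succ, pow_succ]
    group

theorem list_prod_map_reverse_range_conj_pow (x y : G) (k : ℕ) :
    ((List.range k).reverse.map fun i => y ^ i * x * (y ^ i)⁻¹).prod = y ^ k * (y⁻¹ * x) ^ k := by
  induction k with
  | zero => simp
  | succ k ih =>
    rw [List.range_succ, List.reverse_append, List.map_append, List.prod_append, ih,
      List.reverse_singleton, List.map_singleton, List.prod_singleton, pow_succ, pow_succ']
    simp only [mul_assoc, mul_inv_cancel_left, inv_mul_cancel_left]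

theorem list_prod_map_range_mul_of_braid (σ : ℕ → G) {m i : ℕ} (hi : i + 1 < m)
    (hcomm : ∀ a b, a + 2 ≤ b → b < m → Commute (σ a) (σ b))
    (hbraid : σ i * σ (i + 1) * σ i = σ (i + 1) * σ i * σ (i + 1)) :
    ((List.range m).map σ).prod * σ i = σ (i + 1) * ((List.range m).map σ).prod := by
  obtain ⟨t, rfl⟩ : ∃ t, m = i + 2 + t := ⟨m - (i + 2), by omega⟩
  rw [List.range_add, List.range_succ, List.range_succ]
  simp only [List.map_append, List.prod_append, List.map_cons, List.map_nil, List.prod_cons,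
    List.prod_nil, mul_one, List.map_map]
  set A := ((List.range i).map σ).prod
  set T := ((List.range t).map (σ ∘ (i + 2 + ·))).prod
  -- `Δ = A σ_i σ_{i+1} T`, where `A` commutes with `σ_{i+1}` and `T` with `σ_i`.
  have hA : Commute A (σ (i + 1)) := Commute.list_prod_left _ _ fun z hz => by
    obtain ⟨a, ha, rfl⟩ := List.mem_map.1 hz
    exact hcomm a (i + 1) (by simp at ha; omega) (by omega)
  have hT : Commute (σ i) T := Commute.list_prod_right _ _ fun z hz => by
    obtain ⟨c, hc, rfl⟩ := List.mem_map.1 hz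
    exact hcomm i (i + 2 + c) (by omega) (by simp at hc; omega)
  calc A * σ i * σ (i + 1) * T * σ i = A * (σ i * σ (i + 1) * σ i) * T := by
        simp only [hT.symm.eq, mul_assoc]
    _ = σ (i + 1) * (A * σ i * σ (i + 1) * T) := by
        rw [hbraid]; simp only [mul_assoc]; exact hA.left_comm _

theorem conj_pow_eq_of_conj_eq_succ (D : G) (σ : ℕ → G) {m : ℕ}
    (h : ∀ i, i + 1 < m → D * σ i * D⁻¹ = σ (i + 1)) {k : ℕ} (hk : k < m) :
    D ^ k * σ 0 * (D ^ k)⁻¹ = σ k := by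
  induction k with
  | zero => simp
  | succ k ih =>
    rw [← h k hk, ← ih (by omega), pow_succ']
    group

end GroupIdentities

section Relations

variable {K : Type*} [Group K]

structure SatisfiesXYSphereRels (n : ℕ) (x y : K) : Prop where
  commute_conj : ∀ k, 2 ≤ k → k ≤ n - 2 → Commute x (y ^ k * x * (y ^ k)⁻¹)
  braid_conj : x * (y * x * y⁻¹) * x = y * x * y⁻¹ * x * (y * x * y⁻¹)
  mul_pow : (x * y) ^ (n - 1) = y ^ n
  pow_eq_one : y ^ n = 1
  inv_mul_pow : (y⁻¹ * x) ^ (n - 1) = 1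

-- `σ a` stands for `σ_{a+1}`; only the values at `a < n - 1` matter.
structure SatisfiesSphereRels (n : ℕ) (σ : ℕ → K) : Prop where
  commute : ∀ a b, a + 2 ≤ b → b < n - 1 → Commute (σ a) (σ b)
  braid : ∀ a, a + 1 < n - 1 → σ a * σ (a + 1) * σ a = σ (a + 1) * σ a * σ (a + 1)
  delta_pow : ((List.range (n - 1)).map σ).prod ^ n = 1
  delta_mul_deltaRev :
    ((List.range (n - 1)).map σ).prod * ((List.range (n - 1)).reverse.map σ).prod = 1

theorem braid_relator_eq_one_iff {u v : K} :
    u * v * u * v⁻¹ * u⁻¹ * v⁻¹ = 1 ↔ u * v * u = v * u * v := by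
  rw [show u * v * u * v⁻¹ * u⁻¹ * v⁻¹ = u * v * u * (v * u * v)⁻¹ by group, mul_inv_eq_one]

@[simp]
theorem lift_X (f : Bool → K) : FreeGroup.lift f X = f true := FreeGroup.lift_apply_of

@[simp]
theorem lift_Y (f : Bool → K) : FreeGroup.lift f Y = f false := FreeGroup.lift_apply_of

@[simp]
theorem lift_S {N : ℕ} (f : Fin N → K) (i : Fin N) : FreeGroup.lift f (S N i) = f i :=
  FreeGroup.lift_apply_of

theorem lift_deltaWord (N : ℕ) (σ : ℕ → K) :
    FreeGroup.lift (fun i : Fin N => σ i) (deltaWord N) = ((List.range N).map σ).prod := by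
  rw [deltaWord, map_list_prod, List.map_map, ← List.map_coe_finRange_eq_range, List.map_map]
  simp only [Function.comp_def, lift_S]

theorem lift_deltaRevWord (N : ℕ) (σ : ℕ → K) :
    FreeGroup.lift (fun i : Fin N => σ i) (deltaRevWord N)
      = ((List.range N).reverse.map σ).prod := by
  rw [deltaRevWord, map_list_prod, List.map_map, ← List.map_coe_finRange_eq_range,
    ← List.map_reverse, List.map_map]
  simp only [Function.comp_def, lift_S]

theorem forall_lift_xySphereRels_eq_one_iff (n : ℕ) (f : Bool → K) :
    (∀ r ∈ xySphereRels n, FreeGroup.lift f r = 1) ↔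
      SatisfiesXYSphereRels n (f true) (f false) := by
  obtain ⟨x, hx⟩ : ∃ x, f true = x := ⟨_, rfl⟩
  obtain ⟨y, hy⟩ : ∃ y, f false = y := ⟨_, rfl⟩
  rw [hx, hy]
  have commute_iff (k : ℕ) : FreeGroup.lift f
      (X * Y ^ k * X * (Y ^ k)⁻¹ * X⁻¹ * Y ^ k * X⁻¹ * (Y ^ k)⁻¹) = 1 ↔
        Commute x (y ^ k * x * (y ^ k)⁻¹) := by
    rw [← commutatorElement_eq_one_iff_commute, commutatorElement_def]
    simp only [map_mul, map_pow, map_inv, lift_X, lift_Y, hx, hy]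
    group
  have braid_iff : FreeGroup.lift f (X * Y * X * Y⁻¹ * X * Y * X⁻¹ * Y⁻¹ * X⁻¹ * Y * X⁻¹ * Y⁻¹)
      = 1 ↔ x * (y * x * y⁻¹) * x = y * x * y⁻¹ * x * (y * x * y⁻¹) := by
    rw [← braid_relator_eq_one_iff]
    simp only [map_mul, map_inv, lift_X, lift_Y, hx, hy]
    group
  constructor
  · intro h
    refine ⟨fun k hk₂ hk => (commute_iff k).1 (h _ (Or.inl ⟨k, hk₂, hk, rfl⟩)),
      braid_iff.1 (h _ (Or.inr (Or.inl rfl))), ?_, ?_, ?_⟩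
    · simpa [hx, hy, mul_inv_eq_one] using h _ (Or.inr (Or.inr (Or.inl rfl)))
    · simpa [hy] using h _ (Or.inr (Or.inr (Or.inr (Or.inl rfl))))
    · simpa [hx, hy] using h _ (Or.inr (Or.inr (Or.inr (Or.inr rfl))))
  · rintro ⟨hcomm, hbraid, hmul, hpow, hinv⟩ r (⟨k, hk₂, hk, rfl⟩ | rfl | rfl | rfl | rfl)
    · exact (commute_iff k).2 (hcomm k hk₂ hk)
    · exact braid_iff.2 hbraid
    · simp [hx, hy, hmul, hpow]
    · simpa [hy] using hpow
    · simpa [hx, hy] using hinv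

theorem forall_lift_sphereRels_eq_one_iff (n : ℕ) (σ : ℕ → K) :
    (∀ r ∈ sphereRels n, FreeGroup.lift (fun i : Fin (n - 1) => σ i) r = 1) ↔
      SatisfiesSphereRels n σ := by
  have commute_iff (i j : Fin (n - 1)) : FreeGroup.lift (fun i : Fin (n - 1) => σ i)
      (S _ i * S _ j * (S _ i)⁻¹ * (S _ j)⁻¹) = 1 ↔ Commute (σ i) (σ j) := by
    rw [← commutatorElement_eq_one_iff_commute, commutatorElement_def]
    simp only [map_mul, map_inv, lift_S]
  have braid_iff (i j : Fin (n - 1)) : FreeGroup.lift (fun i : Fin (n - 1) => σ i)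
      (S _ i * S _ j * S _ i * (S _ j)⁻¹ * (S _ i)⁻¹ * (S _ j)⁻¹) = 1 ↔
        σ i * σ j * σ i = σ j * σ i * σ j := by
    rw [← braid_relator_eq_one_iff]
    simp only [map_mul, map_inv, lift_S]
  constructor
  · intro h
    refine ⟨fun a b hab hb => ?_, fun a ha => ?_, ?_, ?_⟩
    · exact (commute_iff ⟨a, by omega⟩ ⟨b, hb⟩).1 (h _ (Or.inl ⟨_, _, by simp only; omega, rfl⟩))
    · exact (braid_iff ⟨a, by omega⟩ ⟨a + 1, ha⟩).1 (h _ (Or.inr (Or.inl ⟨_, _, rfl, rfl⟩)))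
    · simpa [lift_deltaWord] using h _ (Or.inr (Or.inr (Or.inl rfl)))
    · simpa [lift_deltaWord, lift_deltaRevWord] using h _ (Or.inr (Or.inr (Or.inr rfl)))
  · rintro ⟨hcomm, hbraid, hpow, hrev⟩ r (⟨i, j, hij, rfl⟩ | ⟨i, j, hij, rfl⟩ | rfl | rfl)
    · exact (commute_iff i j).2 (hcomm i j (by omega) j.isLt)
    · obtain ⟨j, hj⟩ := j
      subst hij
      exact (braid_iff i _).2 (hbraid i hj)
    · simpa [lift_deltaWord] using hpow
    · simpa [lift_deltaWord, lift_deltaRevWord] using hrev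

end Relations

section Transfer

variable {K : Type*} [Group K] {n : ℕ}

theorem SatisfiesXYSphereRels.list_prod_map_range_conj {x y : K}
    (h : SatisfiesXYSphereRels n x y) (hn : 0 < n) :
    ((List.range (n - 1)).map fun a => y ^ a * x * (y ^ a)⁻¹).prod = y := by
  have hy : (y ^ (n - 1))⁻¹ = y := inv_eq_of_mul_eq_one_left <| by
    rw [← pow_succ', Nat.sub_add_cancel hn, h.pow_eq_one]
  rw [list_prod_map_range_conj_pow, h.mul_pow, h.pow_eq_one, one_mul, hy]

theorem SatisfiesXYSphereRels.satisfiesSphereRels_conj {x y : K}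
    (h : SatisfiesXYSphereRels n x y) (hn : 0 < n) :
    SatisfiesSphereRels n fun a => y ^ a * x * (y ^ a)⁻¹ := by
  refine ⟨fun a b hab hb => ?_, fun a ha => ?_, ?_, ?_⟩
  · obtain ⟨k, rfl⟩ := Nat.exists_eq_add_of_le hab
    have hconj := (h.commute_conj (k + 2) (by omega) (by omega)).map (MulAut.conj (y ^ a))
    simp only [MulAut.conj_apply, map_mul, map_inv] at hconj
    convert hconj using 1
    group
  · have hconj := congrArg (MulAut.conj (y ^ a)) h.braid_conj
    simp only [MulAut.conj_apply, map_mul, map_inv] at hconj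
    convert hconj using 1 <;> group
  · rw [h.list_prod_map_range_conj hn, h.pow_eq_one]
  · rw [h.list_prod_map_range_conj hn, list_prod_map_reverse_range_conj_pow, h.inv_mul_pow,
      mul_one, ← pow_succ', Nat.sub_add_cancel hn, h.pow_eq_one]

theorem SatisfiesSphereRels.conj_delta_pow {σ : ℕ → K} (h : SatisfiesSphereRels n σ) {k : ℕ}
    (hk : k < n - 1) :
    ((List.range (n - 1)).map σ).prod ^ k * σ 0 * (((List.range (n - 1)).map σ).prod ^ k)⁻¹
      = σ k :=
  conj_pow_eq_of_conj_eq_succ _ σ (fun i hi => mul_inv_eq_of_eq_mul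
    (list_prod_map_range_mul_of_braid σ hi h.commute (h.braid i hi))) hk

theorem SatisfiesSphereRels.satisfiesXYSphereRels {σ : ℕ → K} (h : SatisfiesSphereRels n σ)
    (hn : 3 ≤ n) : SatisfiesXYSphereRels n (σ 0) ((List.range (n - 1)).map σ).prod := by
  set Δ := ((List.range (n - 1)).map σ).prod with hΔ
  have hσ : (List.range (n - 1)).map (fun i => Δ ^ i * σ 0 * (Δ ^ i)⁻¹)
      = (List.range (n - 1)).map σ := List.map_congr_left fun i hi => h.conj_delta_pow (List.mem_range.1 hi)
  have hΔn : Δ * Δ ^ (n - 1) = Δ ^ n := by rw [← pow_succ', Nat.sub_add_cancel (by omega)]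
  refine ⟨fun k hk₂ hk => ?_, ?_, ?_, h.delta_pow, ?_⟩
  · rw [h.conj_delta_pow (by omega)]
    exact h.commute 0 k (by omega) (by omega)
  · have hσ₁ : Δ * σ 0 * Δ⁻¹ = σ 1 := by simpa using h.conj_delta_pow (k := 1) (by omega)
    rw [hσ₁]
    exact h.braid 0 (by omega)
  · have := list_prod_map_range_conj_pow (σ 0) Δ (n - 1)
    rw [hσ, ← hΔ, eq_mul_inv_iff_mul_eq] at this
    rw [← this, hΔn]
  · have hrev := list_prod_map_reverse_range_conj_pow (σ 0) Δ (n - 1)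
    rw [List.map_reverse, hσ, ← List.map_reverse] at hrev
    have := h.delta_mul_deltaRev
    rwa [← hΔ, hrev, ← mul_assoc, hΔn, h.delta_pow, one_mul] at this

end Transfer

theorem PresentedGroup.lift_of_eq_one {α : Type*} {rels : Set (FreeGroup α)} {r : FreeGroup α}
    (hr : r ∈ rels) : FreeGroup.lift (PresentedGroup.of (rels := rels)) r = 1 := by
  rw [show FreeGroup.lift PresentedGroup.of = PresentedGroup.mk rels from
    FreeGroup.ext_hom _ _ fun _ => FreeGroup.lift_apply_of]
  exact PresentedGroup.one_of_mem hr

section Isomorphism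

variable {n : ℕ}

def sphereGen (n a : ℕ) : PresentedGroup (sphereRels n) :=
  if h : a < n - 1 then PresentedGroup.of ⟨a, h⟩ else 1

theorem sphereGen_of_lt {a : ℕ} (h : a < n - 1) : sphereGen n a = PresentedGroup.of ⟨a, h⟩ :=
  dif_pos h

theorem satisfiesSphereRels_sphereGen (n : ℕ) : SatisfiesSphereRels n (sphereGen n) := by
  refine (forall_lift_sphereRels_eq_one_iff n _).1 fun r hr => ?_
  rw [show (fun i : Fin (n - 1) => sphereGen n i) = PresentedGroup.of from
    funext fun i => sphereGen_of_lt i.isLt]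
  exact PresentedGroup.lift_of_eq_one hr

theorem satisfiesXYSphereRels_of (n : ℕ) :
    SatisfiesXYSphereRels n (PresentedGroup.of true : PresentedGroup (xySphereRels n))
      (PresentedGroup.of false) :=
  (forall_lift_xySphereRels_eq_one_iff n _).1 fun _ => PresentedGroup.lift_of_eq_one

def sphereToXY (hn : 0 < n) : PresentedGroup (sphereRels n) →* PresentedGroup (xySphereRels n) :=
  PresentedGroup.toGroup <| (forall_lift_sphereRels_eq_one_iff n _).2 <|
    (satisfiesXYSphereRels_of n).satisfiesSphereRels_conj hn

def xyToSphere (hn : 3 ≤ n) : PresentedGroup (xySphereRels n) →* PresentedGroup (sphereRels n) :=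
  PresentedGroup.toGroup
    (f := fun b => bif b then sphereGen n 0 else ((List.range (n - 1)).map (sphereGen n)).prod)
    ((forall_lift_xySphereRels_eq_one_iff n _).2
      ((satisfiesSphereRels_sphereGen n).satisfiesXYSphereRels hn))

theorem sphereToXY_of (hn : 0 < n) (i : Fin (n - 1)) :
    sphereToXY hn (PresentedGroup.of i) = PresentedGroup.of false ^ (i : ℕ) *
      PresentedGroup.of true * (PresentedGroup.of false ^ (i : ℕ))⁻¹ :=
  PresentedGroup.toGroup.of _

theorem sphereToXY_sphereGen (hn : 0 < n) {a : ℕ} (ha : a < n - 1) :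
    sphereToXY hn (sphereGen n a) = PresentedGroup.of false ^ a * PresentedGroup.of true *
      (PresentedGroup.of false ^ a)⁻¹ := by
  rw [sphereGen_of_lt ha, sphereToXY_of]

theorem xyToSphere_of_true (hn : 3 ≤ n) :
    xyToSphere hn (PresentedGroup.of true) = sphereGen n 0 :=
  PresentedGroup.toGroup.of _

theorem xyToSphere_of_false (hn : 3 ≤ n) :
    xyToSphere hn (PresentedGroup.of false) = ((List.range (n - 1)).map (sphereGen n)).prod :=
  PresentedGroup.toGroup.of _

theorem sphereToXY_delta (hn : 0 < n) :
    sphereToXY hn ((List.range (n - 1)).map (sphereGen n)).prod = PresentedGroup.of false := by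
  rw [map_list_prod, List.map_map,
    ← (satisfiesXYSphereRels_of n).list_prod_map_range_conj hn]
  exact congrArg List.prod
    (List.map_congr_left fun a ha => sphereToXY_sphereGen hn (List.mem_range.1 ha))

theorem xyToSphere_comp_sphereToXY (hn : 3 ≤ n) :
    (xyToSphere hn).comp (sphereToXY (by omega)) = MonoidHom.id _ := by
  refine PresentedGroup.ext fun i => ?_
  rw [MonoidHom.comp_apply, sphereToXY_of, map_mul, map_mul, map_inv, map_pow,
    xyToSphere_of_true, xyToSphere_of_false,
    (satisfiesSphereRels_sphereGen n).conj_delta_pow i.isLt, sphereGen_of_lt i.isLt]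
  rfl

theorem sphereToXY_comp_xyToSphere (hn : 3 ≤ n) :
    (sphereToXY (by omega)).comp (xyToSphere hn) = MonoidHom.id _ := by
  refine PresentedGroup.ext fun b => ?_
  cases b
  · rw [MonoidHom.comp_apply, xyToSphere_of_false, sphereToXY_delta]
    rfl
  · rw [MonoidHom.comp_apply, xyToSphere_of_true, sphereToXY_sphereGen _ (by omega)]
    simp

end Isomorphism

/-- for `n ≥ 3`, Magnus's presentation of the mapping class group of the
`n`-punctured sphere on the generators `σ_1, …, σ_{n-1}` is isomorphic to the
two-generator presented group, via an isomorphism sending `σ_i` to `y^{i-1} x y^{1-i}` for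
each `1 ≤ i ≤ n-1`. -/
theorem stmt11 (n : ℕ) (hn : 3 ≤ n) :
    ∃ e : PresentedGroup (sphereRels n) ≃* PresentedGroup (xySphereRels n),
      ∀ i : Fin (n - 1),
        e (PresentedGroup.of i)
          = (PresentedGroup.of false : PresentedGroup (xySphereRels n)) ^ (i : ℕ) *
              PresentedGroup.of true *
              ((PresentedGroup.of false : PresentedGroup (xySphereRels n)) ^ (i : ℕ))⁻¹ :=
  ⟨MonoidHom.toMulEquiv _ _ (xyToSphere_comp_sphereToXY hn) (sphereToXY_comp_xyToSphere hn),
    sphereToXY_of (by omega)⟩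
end
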